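/- arXiv:2305.19609 — 7 statements merged into one kernel-verified Lean document; each statement's English description precedes it below -/
import Mathlib

section
/- Let k be a commutative ring, q ∈ k, and let (T, ≺, ≻, •) be a q-tridendriform algebra over k. Define a ≺' b := a ≺ b + q·(a • b). Then (T, ≺', ≻) is a dendriform algebra over k. -/
/-- A `q`-tridendriform algebra `(T, ≺, ≻, •)` induces a dendriform algebra
`(T, ≺', ≻)` where `a ≺' b := a ≺ b + q • (a • b)`. -/
theorem qTridendriform_to_dendriform_left
    (k : Type*) [CommRing k] (q : k)
    (T : Type*) [AddCommGroup T] [Module k T]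
    (pr su bu : T →ₗ[k] T →ₗ[k] T)
    (star : T → T → T)
    (hstar : ∀ a b, star a b = pr a b + su a b + q • bu a b)
    (ax1 : ∀ a b c, pr (pr a b) c = pr a (star b c))
    (ax2 : ∀ a b c, pr (su a b) c = su a (pr b c))
    (ax3 : ∀ a b c, su (star a b) c = su a (su b c))
    (ax4 : ∀ a b c, bu (su a b) c = su a (bu b c))
    (ax5 : ∀ a b c, bu (pr a b) c = bu a (su b c))
    (ax6 : ∀ a b c, pr (bu a b) c = bu a (pr b c))
    (ax7 : ∀ a b c, bu (bu a b) c = bu a (bu b c)) :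
    (∀ a b c, (pr + q • bu) ((pr + q • bu) a b) c
        = (pr + q • bu) a ((pr + q • bu) b c + su b c)) ∧
    (∀ a b c, (pr + q • bu) (su a b) c = su a ((pr + q • bu) b c)) ∧
    (∀ a b c, su ((pr + q • bu) a b + su a b) c = su a (su b c)) := by
  refine ⟨fun a b c => ?_, fun a b c => ?_, fun a b c => ?_⟩
  · simp only [LinearMap.add_apply, LinearMap.smul_apply, map_add, map_smul,
      ax1, ax2, ax3, ax4, ax5, ax6, ax7, hstar, smul_add]
    module
  · simp only [LinearMap.add_apply, LinearMap.smul_apply, map_add, map_smul,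
      ax1, ax2, ax3, ax4, ax5, ax6, ax7, smul_add]
  · have : (pr + q • bu) a b + su a b = star a b := by
      rw [hstar]; simp only [LinearMap.add_apply, LinearMap.smul_apply]; abel
    rw [this, ax3]
end

section
/- Let k be a commutative ring, q ∈ k, let A be an associative k-algebra, and let P be a Rota-Baxter operator of weight q on A. Define a ≺ b := a·P(b), a ≻ b := P(a)·b, and a • b := a·b. Then (A, ≺, ≻, •) is a q-tridendriform algebra over k. -/
/-- A Rota-Baxter operator `P` of weight `q` on an associative `k`-algebra `A` induces a
`q`-tridendriform algebra structure via `a ≺ b := a * P b`, `a ≻ b := P a * b`,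
`a • b := a * b`. -/
theorem rotaBaxter_to_qTridendriform
    (k : Type*) [CommRing k] (q : k)
    (A : Type*) [Ring A] [Algebra k A]
    (P : A →ₗ[k] A)
    (hP : ∀ a b : A, P a * P b = P (a * P b + P a * b + q • (a * b)))
    (pr su bu star : A → A → A)
    (hpr : ∀ a b, pr a b = a * P b)
    (hsu : ∀ a b, su a b = P a * b)
    (hbu : ∀ a b, bu a b = a * b)
    (hstar : ∀ a b, star a b = pr a b + su a b + q • bu a b) :
    (∀ a b c, pr (pr a b) c = pr a (star b c)) ∧
    (∀ a b c, pr (su a b) c = su a (pr b c)) ∧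
    (∀ a b c, su (star a b) c = su a (su b c)) ∧
    (∀ a b c, bu (su a b) c = su a (bu b c)) ∧
    (∀ a b c, bu (pr a b) c = bu a (su b c)) ∧
    (∀ a b c, pr (bu a b) c = bu a (pr b c)) ∧
    (∀ a b c, bu (bu a b) c = bu a (bu b c)) := by
  refine ⟨?_, ?_, ?_, ?_, ?_, ?_, ?_⟩ <;> intro a b c <;>
    simp only [hpr, hsu, hbu, hstar, map_add, map_smul]
  · rw [show P (b * P c) + P (P b * c) + q • P (b * c)
        = P (b * P c + P b * c + q • (b * c)) by simp [map_add, map_smul],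
      ← hP, mul_assoc]
  · rw [mul_assoc]
  · rw [show P (a * P b) + P (P a * b) + q • P (a * b)
        = P (a * P b + P a * b + q • (a * b)) by simp [map_add, map_smul],
      ← hP, mul_assoc]
  · rw [mul_assoc]
  · rw [mul_assoc]
  · rw [mul_assoc]
  · rw [mul_assoc]
end

section
/- Let k be a commutative ring, λ ∈ k, let (A, d) be a differential k-algebra of weight λ, and let P be a Rota-Baxter operator of weight 0 on A such that d ∘ P = P ∘ d. Define a ≺ b := a·P(b) and a ≻ b := P(a)·b. Then (A, ≺, ≻, d) is a differential dendriform algebra of weight λ over k. -/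
/-- If `(A, d)` is a differential `k`-algebra of weight `λ` and `P` is a Rota-Baxter
operator of weight `0` on `A` commuting with `d`, then `a ≺ b := a * P b`,
`a ≻ b := P a * b` make `(A, ≺, ≻, d)` a differential dendriform algebra of weight `λ`. -/
theorem diffRotaBaxterWeightZero_to_diffDendriform
    (k : Type*) [CommRing k] (lam : k)
    (A : Type*) [Ring A] [Algebra k A]
    (d P : A →ₗ[k] A)
    (hd : ∀ a b : A, d (a * b) = d a * b + a * d b + lam • (d a * d b))
    (hP : ∀ a b : A, P a * P b = P (a * P b + P a * b))
    (hdP : ∀ a : A, d (P a) = P (d a))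
    (pr su : A → A → A)
    (hpr : ∀ a b, pr a b = a * P b)
    (hsu : ∀ a b, su a b = P a * b) :
    (∀ a b c, pr (pr a b) c = pr a (pr b c + su b c)) ∧
    (∀ a b c, pr (su a b) c = su a (pr b c)) ∧
    (∀ a b c, su (pr a b + su a b) c = su a (su b c)) ∧
    (∀ a b, d (pr a b) = pr (d a) b + pr a (d b) + lam • pr (d a) (d b)) ∧
    (∀ a b, d (su a b) = su (d a) b + su a (d b) + lam • su (d a) (d b)) := by
  refine ⟨?_, ?_, ?_, ?_, ?_⟩
  · intro a b c
    simp only [hpr, hsu, map_add, mul_assoc, ← hP]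
  · intro a b c
    simp only [hpr, hsu, mul_assoc]
  · intro a b c
    simp only [hpr, hsu, map_add, mul_assoc, ← hP]
  · intro a b
    simp only [hpr, hd, hdP, map_smul, smul_mul_assoc, mul_smul_comm]
  · intro a b
    simp only [hsu, hd, hdP, map_smul, smul_mul_assoc, mul_smul_comm]
end

section
/- Let k be a commutative ring, λ, q ∈ k, let (A, d) be a differential k-algebra of weight λ, and let P be a Rota-Baxter operator of weight q on A such that d ∘ P = P ∘ d. Define a ≺ b := a·P(b), a ≻ b := P(a)·b, and a • b := a·b. Then (A, ≺, ≻, •, d) is a differential q-tridendriform algebra of weight λ over k. -/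
/-- If `(A, d)` is a differential `k`-algebra of weight `λ` and `P` is a Rota-Baxter
operator of weight `q` on `A` commuting with `d`, then `a ≺ b := a * P b`,
`a ≻ b := P a * b`, `a • b := a * b` make `(A, ≺, ≻, •, d)` a differential
`q`-tridendriform algebra of weight `λ`. -/
theorem diffRotaBaxter_to_diffQTridendriform
    (k : Type*) [CommRing k] (lam q : k)
    (A : Type*) [Ring A] [Algebra k A]
    (d P : A →ₗ[k] A)
    (hd : ∀ a b : A, d (a * b) = d a * b + a * d b + lam • (d a * d b))
    (hP : ∀ a b : A, P a * P b = P (a * P b + P a * b + q • (a * b)))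
    (hdP : ∀ a : A, d (P a) = P (d a))
    (pr su bu star : A → A → A)
    (hpr : ∀ a b, pr a b = a * P b)
    (hsu : ∀ a b, su a b = P a * b)
    (hbu : ∀ a b, bu a b = a * b)
    (hstar : ∀ a b, star a b = pr a b + su a b + q • bu a b) :
    (∀ a b c, pr (pr a b) c = pr a (star b c)) ∧
    (∀ a b c, pr (su a b) c = su a (pr b c)) ∧
    (∀ a b c, su (star a b) c = su a (su b c)) ∧
    (∀ a b c, bu (su a b) c = su a (bu b c)) ∧
    (∀ a b c, bu (pr a b) c = bu a (su b c)) ∧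
    (∀ a b c, pr (bu a b) c = bu a (pr b c)) ∧
    (∀ a b c, bu (bu a b) c = bu a (bu b c)) ∧
    (∀ a b, d (pr a b) = pr (d a) b + pr a (d b) + lam • pr (d a) (d b)) ∧
    (∀ a b, d (su a b) = su (d a) b + su a (d b) + lam • su (d a) (d b)) ∧
    (∀ a b, d (bu a b) = bu (d a) b + bu a (d b) + lam • bu (d a) (d b)) := by
  refine ⟨?_, ?_, ?_, ?_, ?_, ?_, ?_, ?_, ?_, ?_⟩ <;>
    intros <;>
    simp only [hpr, hsu, hbu, hstar, hdP, hd, map_add, map_smul, ← hP,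
      mul_assoc, mul_add, add_mul, mul_smul_comm, smul_mul_assoc]
end

section
/- Let k be a commutative ring, λ, q ∈ k, let (A, d) be a differential k-algebra of weight λ, and let P be a Rota-Baxter operator of weight q on A such that d ∘ P = P ∘ d. Define a ≺ b := a·P(b) + q·ab and a ≻ b := P(a)·b. Then (A, ≺, ≻, d) is a differential dendriform algebra of weight λ over k. -/
/-- If `(A, d)` is a differential `k`-algebra of weight `λ` and `P` is a Rota-Baxter
operator of weight `q` on `A` commuting with `d`, then `a ≺ b := a * P b + q • (a * b)`,
`a ≻ b := P a * b` make `(A, ≺, ≻, d)` a differential dendriform algebra of weight `λ`. -/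
theorem diffRotaBaxter_to_diffDendriform_left
    (k : Type*) [CommRing k] (lam q : k)
    (A : Type*) [Ring A] [Algebra k A]
    (d P : A →ₗ[k] A)
    (hd : ∀ a b : A, d (a * b) = d a * b + a * d b + lam • (d a * d b))
    (hP : ∀ a b : A, P a * P b = P (a * P b + P a * b + q • (a * b)))
    (hdP : ∀ a : A, d (P a) = P (d a))
    (pr su : A → A → A)
    (hpr : ∀ a b, pr a b = a * P b + q • (a * b))
    (hsu : ∀ a b, su a b = P a * b) :
    (∀ a b c, pr (pr a b) c = pr a (pr b c + su b c)) ∧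
    (∀ a b c, pr (su a b) c = su a (pr b c)) ∧
    (∀ a b c, su (pr a b + su a b) c = su a (su b c)) ∧
    (∀ a b, d (pr a b) = pr (d a) b + pr a (d b) + lam • pr (d a) (d b)) ∧
    (∀ a b, d (su a b) = su (d a) b + su a (d b) + lam • su (d a) (d b)) := by
  refine ⟨?_, ?_, ?_, ?_, ?_⟩
  · intro a b c
    simp only [hpr, hsu]
    rw [show b * P c + q • (b * c) + P b * c = b * P c + P b * c + q • (b * c) by abel, ← hP]
    simp only [map_add, map_smul, mul_add, add_mul, smul_mul_assoc, mul_smul_comm, smul_add,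
      smul_smul, mul_assoc]
    abel
  · intro a b c
    simp only [hpr, hsu, map_add, map_smul]
    simp only [mul_add, add_mul, smul_mul_assoc, mul_smul_comm, smul_add, smul_smul, mul_assoc]
  · intro a b c
    simp only [hpr, hsu]
    rw [← mul_assoc, hP a b]
    simp only [map_add, map_smul, add_mul, smul_mul_assoc]
    abel
  · intro a b
    simp only [hpr, hsu, map_add, map_smul, hd, hdP]
    simp only [mul_add, add_mul, smul_mul_assoc, mul_smul_comm, smul_add, smul_smul, mul_assoc,
      mul_comm q lam]
    abel
  · intro a b
    simp only [hpr, hsu, map_add, map_smul, hd, hdP]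
end

section
/- Let k be a commutative ring, λ, q ∈ k, let (A, d) be a differential k-algebra of weight λ, and let P be a Rota-Baxter operator of weight q on A such that d ∘ P = P ∘ d. Define a ≺ b := a·P(b) and a ≻ b := P(a)·b + q·ab. Then (A, ≺, ≻, d) is a differential dendriform algebra of weight λ over k. -/
/-- If `(A, d)` is a differential `k`-algebra of weight `λ` and `P` is a Rota-Baxter
operator of weight `q` on `A` commuting with `d`, then `a ≺ b := a * P b`,
`a ≻ b := P a * b + q • (a * b)` make `(A, ≺, ≻, d)` a differential dendriform algebra
of weight `λ`. -/
theorem diffRotaBaxter_to_diffDendriform_right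
    (k : Type*) [CommRing k] (lam q : k)
    (A : Type*) [Ring A] [Algebra k A]
    (d P : A →ₗ[k] A)
    (hd : ∀ a b : A, d (a * b) = d a * b + a * d b + lam • (d a * d b))
    (hP : ∀ a b : A, P a * P b = P (a * P b + P a * b + q • (a * b)))
    (hdP : ∀ a : A, d (P a) = P (d a))
    (pr su : A → A → A)
    (hpr : ∀ a b, pr a b = a * P b)
    (hsu : ∀ a b, su a b = P a * b + q • (a * b)) :
    (∀ a b c, pr (pr a b) c = pr a (pr b c + su b c)) ∧
    (∀ a b c, pr (su a b) c = su a (pr b c)) ∧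
    (∀ a b c, su (pr a b + su a b) c = su a (su b c)) ∧
    (∀ a b, d (pr a b) = pr (d a) b + pr a (d b) + lam • pr (d a) (d b)) ∧
    (∀ a b, d (su a b) = su (d a) b + su a (d b) + lam • su (d a) (d b)) := by
  refine ⟨fun a b c => ?_, fun a b c => ?_, fun a b c => ?_, fun a b => ?_, fun a b => ?_⟩
  · simp only [hpr, hsu]
    rw [mul_assoc, hP, add_assoc]
  · simp only [hpr, hsu, add_mul, smul_mul_assoc, mul_assoc]
  · simp only [hpr, hsu]
    have h : a * P b + (P a * b + q • (a * b)) = a * P b + P a * b + q • (a * b) := by abel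
    rw [h, ← hP]
    simp only [mul_add, add_mul, smul_add, smul_mul_assoc, mul_smul_comm, mul_assoc, smul_smul]
    abel
  · simp only [hpr, hsu, hd, hdP]
  · simp only [hpr, hsu, map_add, map_smul, hd, hdP, smul_add, smul_smul, mul_comm lam q]
    abel
end

section
/- Let k be a commutative ring, λ, q ∈ k, and let (T, ≺, ≻, •, d) be a differential q-tridendriform algebra of weight λ over k. Define a ≻' b := a ≻ b + q·(a • b). Then (T, ≺, ≻', d) is a differential dendriform algebra of weight λ over k. -/
/-- A differential `q`-tridendriform algebra `(T, ≺, ≻, •, d)` of weight `λ` induces a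
differential dendriform algebra `(T, ≺, ≻', d)` of weight `λ`, where
`a ≻' b := a ≻ b + q • (a • b)`. -/
theorem diffQTridendriform_to_diffDendriform
    (k : Type*) [CommRing k] (lam q : k)
    (T : Type*) [AddCommGroup T] [Module k T]
    (pr su bu : T →ₗ[k] T →ₗ[k] T)
    (d : T →ₗ[k] T)
    (star : T → T → T)
    (hstar : ∀ a b, star a b = pr a b + su a b + q • bu a b)
    (ax1 : ∀ a b c, pr (pr a b) c = pr a (star b c))
    (ax2 : ∀ a b c, pr (su a b) c = su a (pr b c))
    (ax3 : ∀ a b c, su (star a b) c = su a (su b c))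
    (ax4 : ∀ a b c, bu (su a b) c = su a (bu b c))
    (ax5 : ∀ a b c, bu (pr a b) c = bu a (su b c))
    (ax6 : ∀ a b c, pr (bu a b) c = bu a (pr b c))
    (ax7 : ∀ a b c, bu (bu a b) c = bu a (bu b c))
    (hd1 : ∀ a b, d (pr a b) = pr (d a) b + pr a (d b) + lam • pr (d a) (d b))
    (hd2 : ∀ a b, d (su a b) = su (d a) b + su a (d b) + lam • su (d a) (d b))
    (hd3 : ∀ a b, d (bu a b) = bu (d a) b + bu a (d b) + lam • bu (d a) (d b)) :
    (∀ a b c, pr (pr a b) c = pr a (pr b c + (su + q • bu) b c)) ∧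
    (∀ a b c, pr ((su + q • bu) a b) c = (su + q • bu) a (pr b c)) ∧
    (∀ a b c, (su + q • bu) (pr a b + (su + q • bu) a b) c
        = (su + q • bu) a ((su + q • bu) b c)) ∧
    (∀ a b, d (pr a b) = pr (d a) b + pr a (d b) + lam • pr (d a) (d b)) ∧
    (∀ a b, d ((su + q • bu) a b) = (su + q • bu) (d a) b + (su + q • bu) a (d b)
        + lam • (su + q • bu) (d a) (d b)) := by
  simp only [LinearMap.add_apply, LinearMap.smul_apply, hstar] at *
  refine ⟨fun a b c => ?_, fun a b c => ?_, fun a b c => ?_, hd1, fun a b => ?_⟩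
  · rw [ax1, add_assoc]
  · simp [ax2, ax6, smul_add]
  · have h3 := ax3 a b c
    have h45 : bu (pr a b + ((su a) b + q • bu a b)) c
        = su a (bu b c) + bu a (su b c + q • bu b c) := by
      simp [ax4, ax5, ax7, smul_add]; abel
    simp only [map_add, LinearMap.add_apply, map_smul, LinearMap.smul_apply] at h3 h45 ⊢
    rw [← add_assoc, h3, h45]
    simp only [smul_add]
    abel
  · simp only [map_add, map_smul, hd2, hd3, smul_add, smul_comm lam q]
    abel
end
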